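/- Let α_{μ_1},...,α_{μ_{n-1}} be asymptotic translations on the unit hyperboloid and let C(α_{μ_1}···α_{μ_{n-1}}) denote the totally symmetric trace-free (with respect to the Lorentz metric η on the translation space) part of their product. Then the function C(α_{μ_1}···α_{μ_{n-1}}) on the hyperboloid satisfies D² C = (1-n²) C. -/

import Mathlib

/-
Common extrinsic setup (used in all files).

We work in ℝ⁴ with the Minkowski inner product of signature (+,+,+,-) (CONTEXT 0).
`Hb` is the unit hyperboloid H = {x | ⟨x,x⟩ = 1}, `Ur` the open exterior region
{⟨x,x⟩ > 0} on which fields on H are represented (only their restriction to H matters,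
since every intrinsic operator below first composes with the radial retraction `ret`,
i.e. with the 0-homogeneous extension).

Standard facts about hypersurfaces give the following *definitions* of the intrinsic
(Levi-Civita) operators of the induced metric q on H in terms of ambient derivatives of
the 0-homogeneous extension:
 * the induced metric q at x ∈ H is the restriction of ⟨·,·⟩ to the tangent space
   {u | ⟨x,u⟩ = 0};
 * the intrinsic Hessian D_aD_b f on tangent vectors is the ambient Hessian of the
   0-homogeneous extension (the second-fundamental-form correction vanishes because the
   0-homogeneous extension has radial derivative 0);
 * the intrinsic gradient D^a f is the ambient Minkowski gradient of the 0-homogeneous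
   extension (automatically tangent);
 * the intrinsic Laplacian D² f = q^{ab} D_aD_b f is the ambient wave operator applied
   to the 0-homogeneous extension;
 * the intrinsic divergence D_a V^a of a tangent field is the ambient divergence of its
   0-homogeneous extension.
-/

noncomputable section

open scoped BigOperators

/-- ℝ⁴. -/
abbrev E4 : Type := Fin 4 → ℝ

/-- The signature (+,+,+,-). -/
def sg (i : Fin 4) : ℝ := if i = 3 then -1 else 1

/-- The Minkowski inner product ⟨x,y⟩ = x₀y₀ + x₁y₁ + x₂y₂ − x₃y₃. -/
def mk4 (x y : E4) : ℝ := ∑ i, sg i * x i * y i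

/-- The unit hyperboloid H = {x | ⟨x,x⟩ = 1}. -/
def Hb : Set E4 := {x | mk4 x x = 1}

/-- The exterior region {x | ⟨x,x⟩ > 0}. -/
def Ur : Set E4 := {x | 0 < mk4 x x}

/-- Radial retraction of the exterior region onto H. -/
def ret (x : E4) : E4 := (Real.sqrt (mk4 x x))⁻¹ • x

/-- 0-homogeneous extension of (the H-restriction of) a scalar field. -/
def Hz (f : E4 → ℝ) : E4 → ℝ := fun x => f (ret x)

/-- Standard basis of ℝ⁴. -/
def bas (i : Fin 4) : E4 := fun j => if j = i then 1 else 0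

/-- Partial derivative ∂_i. -/
def pd (f : E4 → ℝ) (i : Fin 4) (x : E4) : ℝ := fderiv ℝ f x (bas i)

/-- Ambient Minkowski gradient (index raised with the Minkowski metric). -/
def mgrad (f : E4 → ℝ) (x : E4) : E4 := fun i => sg i * pd f i x

/-- Intrinsic gradient D^a f on H. -/
def grH (f : E4 → ℝ) (x : E4) : E4 := mgrad (Hz f) x

/-- Ambient Minkowski wave operator □ = ∂² + ∂² + ∂² − ∂². -/
def boxm (f : E4 → ℝ) (x : E4) : ℝ := ∑ i, sg i * pd (pd f i) i x

/-- Intrinsic Laplacian D² f = q^{ab} D_a D_b f on H. -/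
def D2H (f : E4 → ℝ) (x : E4) : ℝ := boxm (Hz f) x

/-- 0-homogeneous extension of a vector field on H. -/
def HzV (V : E4 → E4) : E4 → E4 := fun x => V (ret x)

/-- Intrinsic divergence D_a V^a on H of a tangent vector field. -/
def divH (V : E4 → E4) (x : E4) : ℝ := ∑ i, fderiv ℝ (HzV V) x (bas i) i

/-- `u` is tangent to H at `x`. -/
def Tang (x u : E4) : Prop := mk4 x u = 0

/-- Intrinsic Hessian D_a D_b f on H, evaluated on (tangent) vectors u, v. -/
def HessH (f : E4 → ℝ) (x u v : E4) : ℝ :=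
  fderiv ℝ (fun y => fderiv ℝ (Hz f) y v) x u

/-- The linear field α_k = ⟨k,·⟩; its restriction to H is an asymptotic translation. -/
def trfn (k : E4) : E4 → ℝ := fun x => mk4 k x

/-- `f` (restricted to H) is an asymptotic translation: D_a D_b f + f q_ab = 0. -/
def IsATrans (f : E4 → ℝ) : Prop :=
  ContDiffOn ℝ (⊤ : ℕ∞) f Ur ∧
  ∀ x ∈ Hb, ∀ u v : E4, Tang x u → Tang x v →
    HessH f x u v + f x * mk4 u v = 0

/-- Index helper: the σ-permuted list of translation vectors, as a total function on ℕ. -/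
def kk (N : ℕ) (k : ℕ → E4) (σ : Equiv.Perm (Fin N)) (j : ℕ) : E4 :=
  if h : j < N then k ((σ ⟨j, h⟩ : Fin N) : ℕ) else 0

/-- The totally symmetric trace-free part C(α_{k 0} ⋯ α_{k (N-1)}) of the product of the
N asymptotic translations α_{k j} = ⟨k j, ·⟩, with concrete index vectors k j ∈ ℝ⁴ ≅ T,
as a function on H (footnote 22 of the paper; η_{μν} ↦ ⟨k i, k j⟩, N = n−1):
C = Σ_{m≤[n/2]} (−1/4)^m binom(n−m−1, m) η_{(μ₁μ₂}⋯η_{μ_{2m-1}μ_{2m}} α_{μ_{2m+1}}⋯α_{μ_{n-1})}. -/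
def Cfun (N : ℕ) (k : ℕ → E4) (x : E4) : ℝ :=
  (Nat.factorial N : ℝ)⁻¹ *
    ∑ σ : Equiv.Perm (Fin N), ∑ m ∈ Finset.range (N / 2 + 1),
      (-(1 : ℝ)/4) ^ m * (Nat.choose (N - m) m : ℝ) *
      (∏ j ∈ Finset.range m, mk4 (kk N k σ (2*j)) (kk N k σ (2*j+1))) *
      (∏ j ∈ Finset.Ico (2*m) N, mk4 (kk N k σ j) x)

-- ============ basic lemmas ============
lemma sg_sq (i : Fin 4) : sg i * sg i = 1 := by
  unfold sg; split <;> norm_num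

lemma mk4_smul_right (v : E4) (c : ℝ) (x : E4) : mk4 v (c • x) = c * mk4 v x := by
  unfold mk4; rw [Finset.mul_sum]; congr 1; ext i; simp [Pi.smul_apply]; ring

lemma mk4_bas (v : E4) (i : Fin 4) : mk4 v (bas i) = sg i * v i := by
  unfold mk4 bas
  rw [Finset.sum_eq_single i] <;> simp +contextual

def lin (v : E4) : E4 →L[ℝ] ℝ :=
  ∑ i, (sg i * v i) • (ContinuousLinearMap.proj i : E4 →L[ℝ] ℝ)

lemma lin_apply (v x : E4) : lin v x = mk4 v x := by
  unfold lin mk4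
  simp [ContinuousLinearMap.sum_apply, mul_assoc]

lemma hasFDerivAt_mk4 (v x : E4) : HasFDerivAt (fun y => mk4 v y) (lin v) x := by
  have h : (fun y => mk4 v y) = ⇑(lin v) := by ext y; rw [lin_apply]
  rw [h]; exact (lin v).hasFDerivAt

lemma hasFDerivAt_quad (x : E4) :
    HasFDerivAt (fun y : E4 => mk4 y y) ((2:ℝ) • lin x) x := by
  have h : ∀ i : Fin 4, HasFDerivAt (fun y : E4 => sg i * y i * y i)
      ((sg i * x i) • (ContinuousLinearMap.proj i : E4 →L[ℝ] ℝ)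
        + (sg i * x i) • (ContinuousLinearMap.proj i : E4 →L[ℝ] ℝ)) x := by
    intro i
    have hp : HasFDerivAt (fun y : E4 => y i)
        (ContinuousLinearMap.proj i : E4 →L[ℝ] ℝ) x :=
      (ContinuousLinearMap.proj i : E4 →L[ℝ] ℝ).hasFDerivAt
    have hsp : HasFDerivAt (fun y : E4 => sg i * y i)
        ((sg i) • (ContinuousLinearMap.proj i : E4 →L[ℝ] ℝ)) x := hp.const_mul _
    have := hsp.fun_mul hp
    rw [show (sg i * x i) • (ContinuousLinearMap.proj i : E4 →L[ℝ] ℝ)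
        + (sg i * x i) • (ContinuousLinearMap.proj i : E4 →L[ℝ] ℝ)
        = (sg i * x i) • (ContinuousLinearMap.proj i : E4 →L[ℝ] ℝ)
        + x i • (sg i) • (ContinuousLinearMap.proj i : E4 →L[ℝ] ℝ) by
      rw [smul_smul, mul_comm (x i)]]
    exact this
  have hs := HasFDerivAt.sum (fun i (_ : i ∈ Finset.univ) => h i)
  have h2 : (fun y : E4 => mk4 y y) = (fun y : E4 => ∑ i, sg i * y i * y i) := by
    ext y; rfl
  have h3 : ((2:ℝ) • lin x) = ∑ i ∈ Finset.univ,
      ((sg i * x i) • (ContinuousLinearMap.proj i : E4 →L[ℝ] ℝ)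
        + (sg i * x i) • (ContinuousLinearMap.proj i : E4 →L[ℝ] ℝ)) := by
    apply ContinuousLinearMap.ext
    intro u
    unfold lin
    simp [ContinuousLinearMap.sum_apply, Finset.sum_add_distrib]
    rw [← Finset.sum_add_distrib, Finset.mul_sum]
    congr 1; ext i; ring
  rw [h2, h3]
  exact hs

lemma hasFDerivAt_qpow (p : ℝ) {x : E4} (hx : 0 < mk4 x x) :
    HasFDerivAt (fun y : E4 => mk4 y y ^ p)
      ((2 * p * mk4 x x ^ (p - 1)) • lin x) x := by
  have h := HasDerivAt.comp_hasFDerivAt (f := fun y : E4 => mk4 y y) x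
      (Real.hasDerivAt_rpow_const (x := mk4 x x) (p := p) (Or.inl hx.ne'))
      (hasFDerivAt_quad x)
  rw [show (2 * p * mk4 x x ^ (p - 1)) • lin x = (p * mk4 x x ^ (p - 1)) • (2:ℝ) • lin x by
    rw [smul_smul]; ring_nf]
  exact h


-- ============ reorganized form ============
def cc (N m : ℕ) : ℝ := (-(1:ℝ)/4)^m * (Nat.choose (N-m) m : ℝ)

def ee (N : ℕ) (k : ℕ → E4) (σ : Equiv.Perm (Fin N)) (m : ℕ) : ℝ :=
  ∏ j ∈ Finset.range m, mk4 (kk N k σ (2*j)) (kk N k σ (2*j+1))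

def PP (N : ℕ) (k : ℕ → E4) (σ : Equiv.Perm (Fin N)) (s : Finset ℕ) (x : E4) : ℝ :=
  ∏ j ∈ s, mk4 (kk N k σ j) x

def pE (N m : ℕ) : ℝ := (m : ℝ) - (N : ℝ)/2

def WW (N : ℕ) (k : ℕ → E4) (y : E4) : ℝ :=
  (Nat.factorial N : ℝ)⁻¹ *
    ∑ σ : Equiv.Perm (Fin N), ∑ m ∈ Finset.range (N / 2 + 1),
      (cc N m * ee N k σ m) *
        (mk4 y y ^ pE N m * PP N k σ (Finset.Ico (2*m) N) y)

lemma Cfun_eq (N : ℕ) (k : ℕ → E4) (x : E4) :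
    Cfun N k x = (Nat.factorial N : ℝ)⁻¹ *
      ∑ σ : Equiv.Perm (Fin N), ∑ m ∈ Finset.range (N / 2 + 1),
        (cc N m * ee N k σ m) * PP N k σ (Finset.Ico (2*m) N) x := by
  rfl

lemma two_mul_le (N m : ℕ) (hm : m ∈ Finset.range (N/2+1)) : 2*m ≤ N := by
  simp [Finset.mem_range] at hm; omega

lemma Hz_eq_WW (N : ℕ) (k : ℕ → E4) {y : E4} (hy : y ∈ Ur) :
    Hz (Cfun N k) y = WW N k y := by
  have hQ : 0 < mk4 y y := hy
  have hrQ : (0:ℝ) < Real.sqrt (mk4 y y) := Real.sqrt_pos.mpr hQ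
  have hret : ret y = (Real.sqrt (mk4 y y))⁻¹ • y := rfl
  unfold Hz
  rw [Cfun_eq, WW, hret]
  congr 1
  apply Finset.sum_congr rfl; intro σ _
  apply Finset.sum_congr rfl; intro m hm
  have hcard : (Finset.Ico (2*m) N).card = N - 2*m := Nat.card_Ico _ _
  have hPP : PP N k σ (Finset.Ico (2*m) N) ((Real.sqrt (mk4 y y))⁻¹ • y)
      = ((Real.sqrt (mk4 y y))⁻¹) ^ (N - 2*m) * PP N k σ (Finset.Ico (2*m) N) y := by
    unfold PP
    rw [← hcard, ← Finset.prod_const ((Real.sqrt (mk4 y y))⁻¹), ← Finset.prod_mul_distrib]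
    apply Finset.prod_congr rfl; intro j _
    exact mk4_smul_right _ _ _
  rw [hPP]
  have hc : ((Real.sqrt (mk4 y y))⁻¹) ^ (N - 2*m) = mk4 y y ^ pE N m := by
    have h1 : (Real.sqrt (mk4 y y))⁻¹ = mk4 y y ^ (-(1/2) : ℝ) := by
      rw [Real.sqrt_eq_rpow, ← Real.rpow_neg hQ.le]
    rw [h1, ← Real.rpow_natCast (mk4 y y ^ (-(1/2) : ℝ)) (N - 2*m),
      ← Real.rpow_mul hQ.le]
    congr 1
    have h2 : 2*m ≤ N := two_mul_le N m hm
    rw [Nat.cast_sub h2]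
    unfold pE
    push_cast
    ring
  rw [hc]

-- ============ first derivative layer ============

lemma hasFDerivAt_PP (N : ℕ) (k : ℕ → E4) (σ : Equiv.Perm (Fin N)) (s : Finset ℕ) (y : E4) :
    HasFDerivAt (fun y => PP N k σ s y)
      (∑ a ∈ s, PP N k σ (s.erase a) y • lin (kk N k σ a)) y :=
  HasFDerivAt.finset_prod (fun j _ => hasFDerivAt_mk4 _ y)

/-- derivative CLM of the (σ,m) term of WW -/
def TD (N : ℕ) (k : ℕ → E4) (σ : Equiv.Perm (Fin N)) (m : ℕ) (y : E4) : E4 →L[ℝ] ℝ :=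
  (mk4 y y ^ pE N m) •
      (∑ a ∈ Finset.Ico (2*m) N,
        PP N k σ ((Finset.Ico (2*m) N).erase a) y • lin (kk N k σ a))
    + (PP N k σ (Finset.Ico (2*m) N) y) •
        ((2 * pE N m * mk4 y y ^ (pE N m - 1)) • lin y)

lemma hasFDerivAt_term (N : ℕ) (k : ℕ → E4) (σ : Equiv.Perm (Fin N)) (m : ℕ)
    {y : E4} (hy : 0 < mk4 y y) :
    HasFDerivAt (fun y => mk4 y y ^ pE N m * PP N k σ (Finset.Ico (2*m) N) y)
      (TD N k σ m y) y :=
  (hasFDerivAt_qpow _ hy).mul (hasFDerivAt_PP N k σ _ y)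

/-- derivative CLM of WW -/
def DW (N : ℕ) (k : ℕ → E4) (y : E4) : E4 →L[ℝ] ℝ :=
  (Nat.factorial N : ℝ)⁻¹ •
    ∑ σ : Equiv.Perm (Fin N), ∑ m ∈ Finset.range (N / 2 + 1),
      (cc N m * ee N k σ m) • TD N k σ m y

lemma hasFDerivAt_WW (N : ℕ) (k : ℕ → E4) {y : E4} (hy : 0 < mk4 y y) :
    HasFDerivAt (WW N k) (DW N k y) y := by
  unfold WW DW
  apply HasFDerivAt.const_mul
  apply HasFDerivAt.fun_sum
  intro σ _
  apply HasFDerivAt.fun_sum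
  intro m _
  exact (hasFDerivAt_term N k σ m hy).const_mul _

/-- scalar form of the (σ,m) term of the derivative in direction `bas i` -/
def gg (N : ℕ) (k : ℕ → E4) (σ : Equiv.Perm (Fin N)) (m : ℕ) (i : Fin 4) (y : E4) : ℝ :=
  mk4 y y ^ pE N m *
      (∑ a ∈ Finset.Ico (2*m) N,
        PP N k σ ((Finset.Ico (2*m) N).erase a) y * (sg i * kk N k σ a i))
    + PP N k σ (Finset.Ico (2*m) N) y *
        (2 * pE N m * mk4 y y ^ (pE N m - 1) * (sg i * y i))

lemma TD_apply (N : ℕ) (k : ℕ → E4) (σ : Equiv.Perm (Fin N)) (m : ℕ) (y : E4) (i : Fin 4) :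
    TD N k σ m y (bas i) = gg N k σ m i y := by
  unfold TD gg
  simp [ContinuousLinearMap.sum_apply, lin_apply, mk4_bas, Finset.mul_sum]

lemma DW_apply (N : ℕ) (k : ℕ → E4) (y : E4) (i : Fin 4) :
    DW N k y (bas i) = (Nat.factorial N : ℝ)⁻¹ *
      ∑ σ : Equiv.Perm (Fin N), ∑ m ∈ Finset.range (N / 2 + 1),
        (cc N m * ee N k σ m) * gg N k σ m i y := by
  unfold DW
  simp [ContinuousLinearMap.sum_apply, TD_apply]

-- ============ second derivative layer ============

def AA (N : ℕ) (k : ℕ → E4) (σ : Equiv.Perm (Fin N)) (m : ℕ) (i : Fin 4) (y : E4) : ℝ :=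
  ∑ a ∈ Finset.Ico (2*m) N,
    PP N k σ ((Finset.Ico (2*m) N).erase a) y * (sg i * kk N k σ a i)

def Ad (N : ℕ) (k : ℕ → E4) (σ : Equiv.Perm (Fin N)) (m : ℕ) (i : Fin 4) (y : E4) :
    E4 →L[ℝ] ℝ :=
  ∑ a ∈ Finset.Ico (2*m) N, (sg i * kk N k σ a i) •
    (∑ b ∈ ((Finset.Ico (2*m) N).erase a),
      PP N k σ (((Finset.Ico (2*m) N).erase a).erase b) y • lin (kk N k σ b))

def BB (N : ℕ) (m : ℕ) (i : Fin 4) (y : E4) : ℝ :=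
  2 * pE N m * mk4 y y ^ (pE N m - 1) * (sg i * y i)

def Bd (N : ℕ) (m : ℕ) (i : Fin 4) (y : E4) : E4 →L[ℝ] ℝ :=
  (2 * pE N m * mk4 y y ^ (pE N m - 1)) •
      ((sg i) • (ContinuousLinearMap.proj i : E4 →L[ℝ] ℝ))
    + (sg i * y i) •
        ((2 * pE N m) • ((2 * (pE N m - 1) * mk4 y y ^ (pE N m - 1 - 1)) • lin y))

def L2 (N : ℕ) (k : ℕ → E4) (σ : Equiv.Perm (Fin N)) (m : ℕ) (i : Fin 4) (y : E4) :
    E4 →L[ℝ] ℝ :=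
  ((mk4 y y ^ pE N m) • Ad N k σ m i y
      + AA N k σ m i y • ((2 * pE N m * mk4 y y ^ (pE N m - 1)) • lin y))
    + (PP N k σ (Finset.Ico (2*m) N) y • Bd N m i y
      + BB N m i y •
          (∑ a ∈ Finset.Ico (2*m) N,
            PP N k σ ((Finset.Ico (2*m) N).erase a) y • lin (kk N k σ a)))

lemma hasFDerivAt_AA (N : ℕ) (k : ℕ → E4) (σ : Equiv.Perm (Fin N)) (m : ℕ) (i : Fin 4)
    (y : E4) : HasFDerivAt (AA N k σ m i) (Ad N k σ m i y) y := by
  unfold AA Ad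
  exact HasFDerivAt.fun_sum fun a _ => (hasFDerivAt_PP N k σ _ y).mul_const _

lemma hasFDerivAt_BB (N : ℕ) (m : ℕ) (i : Fin 4) {y : E4} (hy : 0 < mk4 y y) :
    HasFDerivAt (BB N m i) (Bd N m i y) y := by
  unfold BB Bd
  exact ((hasFDerivAt_qpow _ hy).const_mul _).mul
    ((ContinuousLinearMap.proj i : E4 →L[ℝ] ℝ).hasFDerivAt.const_mul _)

lemma hasFDerivAt_gg (N : ℕ) (k : ℕ → E4) (σ : Equiv.Perm (Fin N)) (m : ℕ) (i : Fin 4)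
    {y : E4} (hy : 0 < mk4 y y) :
    HasFDerivAt (gg N k σ m i) (L2 N k σ m i y) y := by
  have h1 := (hasFDerivAt_qpow (pE N m) hy).mul (hasFDerivAt_AA N k σ m i y)
  have h2 := (hasFDerivAt_PP N k σ (Finset.Ico (2*m) N) y).mul (hasFDerivAt_BB N m i hy)
  exact h1.add h2

-- ============ contraction helpers ============

lemma sum_sg_mul (u v : E4) :
    ∑ i, sg i * (sg i * u i * (sg i * v i)) = mk4 u v := by
  unfold mk4
  apply Finset.sum_congr rfl
  intro i _
  linear_combination (u i * v i * sg i) * (sg_sq i)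

lemma sum_sg_sq : ∑ i : Fin 4, sg i * sg i = 4 := by
  simp [Fin.sum_univ_four, sg_sq]

lemma bas_self (i : Fin 4) : bas i i = 1 := by simp [bas]

lemma contract1 (u v : E4) (c : ℝ) :
    ∑ i, sg i * (c * (sg i * u i * (sg i * v i))) = mk4 u v * c := by
  have h : ∀ i : Fin 4, sg i * (c * (sg i * u i * (sg i * v i)))
      = c * (sg i * (sg i * u i * (sg i * v i))) := fun i => by ring
  rw [Finset.sum_congr rfl fun i _ => h i, ← Finset.mul_sum, sum_sg_mul]
  ring

lemma contract0 (c : ℝ) : ∑ i : Fin 4, sg i * (c * sg i) = c * 4 := by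
  have h : ∀ i : Fin 4, sg i * (c * sg i) = c * (sg i * sg i) := fun i => by ring
  rw [Finset.sum_congr rfl fun i _ => h i, ← Finset.mul_sum, sum_sg_sq]

lemma prod_erase_mul' (N : ℕ) (k : ℕ → E4) (σ : Equiv.Perm (Fin N)) (s : Finset ℕ)
    {a : ℕ} (ha : a ∈ s) (x : E4) :
    PP N k σ (s.erase a) x * mk4 (kk N k σ a) x = PP N k σ s x :=
  Finset.prod_erase_mul s _ ha

/-- the second-order "B-term" of a (σ,m) summand -/
def Bt (N : ℕ) (k : ℕ → E4) (σ : Equiv.Perm (Fin N)) (m : ℕ) (x : E4) : ℝ :=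
  ∑ a ∈ Finset.Ico (2*m) N, ∑ b ∈ (Finset.Ico (2*m) N).erase a,
    mk4 (kk N k σ a) (kk N k σ b) *
      PP N k σ (((Finset.Ico (2*m) N).erase a).erase b) x

def ββ (N m : ℕ) : ℝ :=
  4 * pE N m * (((Finset.Ico (2*m) N).card : ℝ) + pE N m + 1)

lemma key (N : ℕ) (k : ℕ → E4) (σ : Equiv.Perm (Fin N)) (m : ℕ)
    {x : E4} (hx : x ∈ Hb) :
    ∑ i, sg i * (L2 N k σ m i x) (bas i)
      = Bt N k σ m x + ββ N m * PP N k σ (Finset.Ico (2*m) N) x := by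
  have hx1 : mk4 x x = 1 := hx
  set s := Finset.Ico (2*m) N with hs
  set p := pE N m with hp
  have hL : ∀ i, (L2 N k σ m i x) (bas i) =
      (∑ a ∈ s, ∑ b ∈ s.erase a,
        PP N k σ ((s.erase a).erase b) x * (sg i * kk N k σ a i * (sg i * kk N k σ b i)))
      + 2 * p * (∑ a ∈ s, PP N k σ (s.erase a) x * (sg i * kk N k σ a i * (sg i * x i)))
      + PP N k σ s x * (2 * p) * sg i
      + PP N k σ s x * (4 * p * (p - 1)) * (sg i * x i * (sg i * x i))
      + 2 * p * (∑ a ∈ s, PP N k σ (s.erase a) x * (sg i * kk N k σ a i * (sg i * x i))) := by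
    intro i
    unfold L2 Ad AA Bd BB
    rw [← hs, ← hp]
    simp only [ContinuousLinearMap.add_apply, ContinuousLinearMap.smul_apply,
      ContinuousLinearMap.sum_apply, ContinuousLinearMap.proj_apply, lin_apply,
      mk4_bas, bas_self, smul_eq_mul, hx1, Real.one_rpow]
    have e1 : 1 * ∑ a ∈ s, (sg i * kk N k σ a i *
          ∑ b ∈ s.erase a, PP N k σ ((s.erase a).erase b) x * (sg i * kk N k σ b i))
        = ∑ a ∈ s, ∑ b ∈ s.erase a,
            PP N k σ ((s.erase a).erase b) x * (sg i * kk N k σ a i * (sg i * kk N k σ b i)) := by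
      rw [one_mul]
      refine Finset.sum_congr rfl fun a _ => ?_
      rw [Finset.mul_sum]
      exact Finset.sum_congr rfl fun b _ => by ring
    have e2 : (∑ a ∈ s, PP N k σ (s.erase a) x * (sg i * kk N k σ a i)) * (2 * p * 1 * (sg i * x i))
        = 2 * p * ∑ a ∈ s, PP N k σ (s.erase a) x * (sg i * kk N k σ a i * (sg i * x i)) := by
      rw [Finset.sum_mul, Finset.mul_sum]
      exact Finset.sum_congr rfl fun a _ => by ring
    have e5 : 2 * p * 1 * (sg i * x i) * ∑ a ∈ s, PP N k σ (s.erase a) x * (sg i * kk N k σ a i)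
        = 2 * p * ∑ a ∈ s, PP N k σ (s.erase a) x * (sg i * kk N k σ a i * (sg i * x i)) := by
      rw [Finset.mul_sum, Finset.mul_sum]
      exact Finset.sum_congr rfl fun a _ => by ring
    have e3 : PP N k σ s x * (2 * p * 1 * (sg i * 1) + sg i * x i * (2 * p * (2 * (p - 1) * 1 * (sg i * x i))))
        = PP N k σ s x * (2 * p) * sg i
          + PP N k σ s x * (4 * p * (p - 1)) * (sg i * x i * (sg i * x i)) := by
      ring
    rw [e1, e2, e3, e5]
    ring
  have hstep : ∑ i, sg i * (L2 N k σ m i x) (bas i)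
      = (∑ i, sg i * (∑ a ∈ s, ∑ b ∈ s.erase a,
          PP N k σ ((s.erase a).erase b) x * (sg i * kk N k σ a i * (sg i * kk N k σ b i))))
      + (∑ i, sg i * (2 * p * ∑ a ∈ s,
          PP N k σ (s.erase a) x * (sg i * kk N k σ a i * (sg i * x i))))
      + (∑ i, sg i * (PP N k σ s x * (2 * p) * sg i))
      + (∑ i, sg i * (PP N k σ s x * (4 * p * (p - 1)) * (sg i * x i * (sg i * x i))))
      + (∑ i, sg i * (2 * p * ∑ a ∈ s,
          PP N k σ (s.erase a) x * (sg i * kk N k σ a i * (sg i * x i)))) := by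
    rw [← Finset.sum_add_distrib, ← Finset.sum_add_distrib, ← Finset.sum_add_distrib,
      ← Finset.sum_add_distrib]
    refine Finset.sum_congr rfl fun i _ => ?_
    rw [hL i]; ring
  rw [hstep]
  have hS1 : ∑ i, sg i * (∑ a ∈ s, ∑ b ∈ s.erase a,
      PP N k σ ((s.erase a).erase b) x * (sg i * kk N k σ a i * (sg i * kk N k σ b i)))
      = Bt N k σ m x := by
    unfold Bt; rw [← hs]
    simp only [Finset.mul_sum]
    rw [Finset.sum_comm]
    refine Finset.sum_congr rfl fun a _ => ?_
    rw [Finset.sum_comm]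
    exact Finset.sum_congr rfl fun b _ => contract1 _ _ _
  have hS2 : ∑ i, sg i * (2 * p * ∑ a ∈ s,
      PP N k σ (s.erase a) x * (sg i * kk N k σ a i * (sg i * x i)))
      = 2 * p * ((s.card : ℝ) * PP N k σ s x) := by
    simp only [Finset.mul_sum]
    rw [Finset.sum_comm]
    have hin : ∀ a ∈ s, (∑ i, sg i * (2 * p *
        (PP N k σ (s.erase a) x * (sg i * kk N k σ a i * (sg i * x i)))))
        = 2 * p * PP N k σ s x := by
      intro a ha
      have h' : ∀ i : Fin 4, sg i * (2 * p *
          (PP N k σ (s.erase a) x * (sg i * kk N k σ a i * (sg i * x i))))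
          = sg i * ((2 * p * PP N k σ (s.erase a) x) * (sg i * kk N k σ a i * (sg i * x i))) :=
        fun i => by ring
      rw [Finset.sum_congr rfl fun i _ => h' i, contract1,
        show mk4 (kk N k σ a) x * (2 * p * PP N k σ (s.erase a) x)
          = 2 * p * (PP N k σ (s.erase a) x * mk4 (kk N k σ a) x) from by ring,
        prod_erase_mul' N k σ s ha]
    rw [Finset.sum_congr rfl hin, Finset.sum_const, nsmul_eq_mul]
    ring
  have hS3 : ∑ i, sg i * (PP N k σ s x * (2 * p) * sg i)
      = PP N k σ s x * (2 * p) * 4 := contract0 _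
  have hS4 : ∑ i, sg i * (PP N k σ s x * (4 * p * (p - 1)) * (sg i * x i * (sg i * x i)))
      = PP N k σ s x * (4 * p * (p - 1)) := by
    rw [contract1, hx1]; ring
  rw [hS1, hS2, hS3, hS4]
  unfold ββ
  rw [← hs, ← hp]
  ring

-- ============ assembly of the analytic computation ============

lemma continuous_Q : Continuous fun y : E4 => mk4 y y := by
  have : (fun y : E4 => mk4 y y) = fun y : E4 => ∑ i, sg i * y i * y i := rfl
  rw [this]
  exact continuous_finset_sum _ fun i _ =>
    (continuous_const.mul (continuous_apply i)).mul (continuous_apply i)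

lemma isOpen_Ur : IsOpen Ur := isOpen_Ioi.preimage continuous_Q

lemma Hb_sub_Ur : Hb ⊆ Ur := by
  intro x hx
  have : mk4 x x = 1 := hx
  show (0:ℝ) < mk4 x x
  rw [this]; norm_num

/-- the scalar function representing pd (Hz (Cfun N k)) i on Ur -/
def F2 (N : ℕ) (k : ℕ → E4) (i : Fin 4) (y : E4) : ℝ :=
  (Nat.factorial N : ℝ)⁻¹ *
    ∑ σ : Equiv.Perm (Fin N), ∑ m ∈ Finset.range (N / 2 + 1),
      (cc N m * ee N k σ m) * gg N k σ m i y

lemma pd_Hz_eq (N : ℕ) (k : ℕ → E4) (i : Fin 4) {y : E4} (hy : y ∈ Ur) :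
    pd (Hz (Cfun N k)) i y = F2 N k i y := by
  have hev : Hz (Cfun N k) =ᶠ[nhds y] WW N k :=
    Filter.eventuallyEq_of_mem (isOpen_Ur.mem_nhds hy) (fun z hz => Hz_eq_WW N k hz)
  have h1 : fderiv ℝ (Hz (Cfun N k)) y = DW N k y := by
    rw [hev.fderiv_eq]
    exact (hasFDerivAt_WW N k hy).fderiv
  show fderiv ℝ (Hz (Cfun N k)) y (bas i) = _
  rw [h1, DW_apply]
  rfl

lemma hasFDerivAt_F2 (N : ℕ) (k : ℕ → E4) (i : Fin 4) {x : E4} (hx : 0 < mk4 x x) :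
    HasFDerivAt (F2 N k i)
      ((Nat.factorial N : ℝ)⁻¹ •
        ∑ σ : Equiv.Perm (Fin N), ∑ m ∈ Finset.range (N / 2 + 1),
          (cc N m * ee N k σ m) • L2 N k σ m i x) x := by
  unfold F2
  apply HasFDerivAt.const_mul
  apply HasFDerivAt.fun_sum
  intro σ _
  apply HasFDerivAt.fun_sum
  intro m _
  exact (hasFDerivAt_gg N k σ m i hx).const_mul _

lemma box_formula (N : ℕ) (k : ℕ → E4) {x : E4} (hx : x ∈ Hb) :
    D2H (Cfun N k) x = (Nat.factorial N : ℝ)⁻¹ *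
      ∑ σ : Equiv.Perm (Fin N), ∑ m ∈ Finset.range (N / 2 + 1),
        (cc N m * ee N k σ m) *
          (Bt N k σ m x + ββ N m * PP N k σ (Finset.Ico (2*m) N) x) := by
  have hxU : x ∈ Ur := Hb_sub_Ur hx
  have hx0 : 0 < mk4 x x := hxU
  have hpd2 : ∀ i, pd (pd (Hz (Cfun N k)) i) i x
      = (Nat.factorial N : ℝ)⁻¹ *
        ∑ σ : Equiv.Perm (Fin N), ∑ m ∈ Finset.range (N / 2 + 1),
          (cc N m * ee N k σ m) * (L2 N k σ m i x) (bas i) := by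
    intro i
    have hev : pd (Hz (Cfun N k)) i =ᶠ[nhds x] F2 N k i :=
      Filter.eventuallyEq_of_mem (isOpen_Ur.mem_nhds hxU) (fun z hz => pd_Hz_eq N k i hz)
    show fderiv ℝ (pd (Hz (Cfun N k)) i) x (bas i) = _
    rw [hev.fderiv_eq, (hasFDerivAt_F2 N k i hx0).fderiv]
    simp [ContinuousLinearMap.sum_apply]
  show boxm (Hz (Cfun N k)) x = _
  unfold boxm
  rw [Finset.sum_congr rfl fun i _ => congrArg (sg i * ·) (hpd2 i)]
  have hpull : ∑ i, sg i * ((Nat.factorial N : ℝ)⁻¹ *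
      ∑ σ : Equiv.Perm (Fin N), ∑ m ∈ Finset.range (N / 2 + 1),
        (cc N m * ee N k σ m) * (L2 N k σ m i x) (bas i))
      = (Nat.factorial N : ℝ)⁻¹ * ∑ i, sg i *
          ∑ σ : Equiv.Perm (Fin N), ∑ m ∈ Finset.range (N / 2 + 1),
            (cc N m * ee N k σ m) * (L2 N k σ m i x) (bas i) := by
    rw [Finset.mul_sum]
    exact Finset.sum_congr rfl fun i _ => by ring
  rw [hpull]
  congr 1
  simp only [Finset.mul_sum]
  rw [Finset.sum_comm]
  refine Finset.sum_congr rfl fun σ _ => ?_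
  rw [Finset.sum_comm]
  refine Finset.sum_congr rfl fun m _ => ?_
  have hpc : ∀ i : Fin 4, sg i * ((cc N m * ee N k σ m) * (L2 N k σ m i x) (bas i))
      = (cc N m * ee N k σ m) * (sg i * (L2 N k σ m i x) (bas i)) := fun i => by ring
  rw [Finset.sum_congr rfl fun i _ => hpc i, ← Finset.mul_sum, key N k σ m hx]

-- ============ combinatorial relabeling ============

lemma kk_lt (N : ℕ) (k : ℕ → E4) (σ : Equiv.Perm (Fin N)) {j : ℕ} (hj : j < N) :
    kk N k σ j = k ((σ ⟨j, hj⟩ : Fin N) : ℕ) := dif_pos hj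

lemma perm_swap (N : ℕ) (k : ℕ → E4) (m : ℕ) (x : E4) {a b : ℕ}
    (ha : a ∈ Finset.Ico (2*m) N) (hb : b ∈ (Finset.Ico (2*m) N).erase a) :
    ∑ σ : Equiv.Perm (Fin N),
      ee N k σ m * (mk4 (kk N k σ a) (kk N k σ b) *
        PP N k σ (((Finset.Ico (2*m) N).erase a).erase b) x)
    = ∑ σ : Equiv.Perm (Fin N),
        ee N k σ (m+1) * PP N k σ (Finset.Ico (2*(m+1)) N) x := by
  rw [Finset.mem_Ico] at ha
  have hbb := Finset.mem_erase.mp hb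
  rw [Finset.mem_Ico] at hbb
  obtain ⟨hba, hb2, hbN⟩ : b ≠ a ∧ 2*m ≤ b ∧ b < N := ⟨hbb.1, hbb.2.1, hbb.2.2⟩
  have haN : a < N := ha.2
  have ha2 : 2*m ≤ a := ha.1
  have hmN : 2*m+1 < N := by omega
  set M0 : Fin N := ⟨2*m, by omega⟩ with hM0
  set M1 : Fin N := ⟨2*m+1, hmN⟩ with hM1
  set A : Fin N := ⟨a, haN⟩ with hA
  set B : Fin N := ⟨b, hbN⟩ with hB
  set s1 : Equiv.Perm (Fin N) := Equiv.swap M0 A with hs1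
  set τ : Equiv.Perm (Fin N) := (Equiv.swap M1 (s1 B)).trans s1 with hτ
  have hBA : B ≠ A := by simp only [hB, hA, ne_eq, Fin.mk.injEq]; exact hba
  have hs1B : s1 B = A ∨ s1 B = B := by
    rcases eq_or_ne B M0 with h | h
    · left; rw [hs1, h]; exact Equiv.swap_apply_left _ _
    · right; rw [hs1]; exact Equiv.swap_apply_of_ne_of_ne h hBA
  have hs1B2 : 2*m ≤ (s1 B).val := by
    rcases hs1B with h | h <;> rw [h]
    · exact ha2
    · exact hb2
  have hτapp : ∀ z : Fin N, τ z = s1 ((Equiv.swap M1 (s1 B)) z) := fun z => rfl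
  have hM0M1 : M0 ≠ M1 := by simp only [hM0, hM1, ne_eq, Fin.mk.injEq]; omega
  have hM0s1B : M0 ≠ s1 B := by
    intro h
    have h2 : s1 M0 = B := by rw [h, Equiv.swap_apply_self]
    rw [hs1, Equiv.swap_apply_left] at h2
    exact hBA h2.symm
  have f0 : τ M0 = A := by
    rw [hτapp, Equiv.swap_apply_of_ne_of_ne hM0M1 hM0s1B, hs1, Equiv.swap_apply_left]
  have f1 : τ M1 = B := by
    rw [hτapp, Equiv.swap_apply_left, hs1, Equiv.swap_apply_self]
  have flo : ∀ z : Fin N, z.val < 2*m → τ z = z := by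
    intro z hz
    have h1 : z ≠ M1 := by intro h; rw [h] at hz; simp [hM1] at hz
    have h2 : z ≠ s1 B := by intro h; rw [← h] at hs1B2; omega
    have h3 : z ≠ M0 := by intro h; rw [h] at hz; simp [hM0] at hz
    have h4 : z ≠ A := by intro h; rw [h] at hz; simp only [hA] at hz; omega
    rw [hτapp, Equiv.swap_apply_of_ne_of_ne h1 h2, hs1,
      Equiv.swap_apply_of_ne_of_ne h3 h4]
  have fhi : ∀ z : Fin N, 2*m ≤ z.val → 2*m ≤ (τ z).val := by
    intro z hz
    by_contra hlt
    push_neg at hlt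
    have := flo (τ z) hlt
    have h2 := τ.injective this
    rw [h2] at hlt
    omega
  have fshi : ∀ z : Fin N, 2*m ≤ z.val → 2*m ≤ (τ.symm z).val := by
    intro z hz
    by_contra hlt
    push_neg at hlt
    have h1 := flo (τ.symm z) hlt
    have h2 : z = τ.symm z := by
      conv_lhs => rw [← τ.apply_symm_apply z, h1]
    rw [← h2] at hlt
    omega
  have hmul : ∀ (σ : Equiv.Perm (Fin N)) (z : Fin N), (σ * τ) z = σ (τ z) :=
    fun σ z => rfl
  apply Fintype.sum_bijective (fun σ => σ * τ) (Group.mulRight_bijective τ)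
  intro σ
  have heq1 : ee N k (σ * τ) (m+1)
      = ee N k σ m * mk4 (kk N k σ a) (kk N k σ b) := by
    unfold ee
    rw [Finset.prod_range_succ]
    congr 1
    · apply Finset.prod_congr rfl
      intro j hj
      rw [Finset.mem_range] at hj
      have h2j : 2*j < N := by omega
      have h2j1 : 2*j+1 < N := by omega
      have hj2m : (2*j : ℕ) < 2*m := by omega
      have hj2m1 : (2*j+1 : ℕ) < 2*m := by omega
      rw [kk_lt N k _ h2j, kk_lt N k _ h2j1, kk_lt N k σ h2j, kk_lt N k σ h2j1]
      rw [hmul, hmul, flo _ hj2m, flo _ hj2m1]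
    · have h2m : 2*m < N := by omega
      rw [kk_lt N k _ h2m, kk_lt N k _ hmN, kk_lt N k σ haN, kk_lt N k σ hbN]
      rw [hmul, hmul]
      have e0 : (⟨2*m, h2m⟩ : Fin N) = M0 := rfl
      have e1 : (⟨2*m+1, hmN⟩ : Fin N) = M1 := rfl
      rw [e0, e1, f0, f1]
  have heq2 : PP N k (σ * τ) (Finset.Ico (2*(m+1)) N) x
      = PP N k σ (((Finset.Ico (2*m) N).erase a).erase b) x := by
    unfold PP
    apply Finset.prod_nbij' (fun j => if h : j < N then ((τ ⟨j, h⟩ : Fin N) : ℕ) else j)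
      (fun l => if h : l < N then ((τ.symm ⟨l, h⟩ : Fin N) : ℕ) else l)
    · intro j hj
      rw [Finset.mem_Ico] at hj
      obtain ⟨hj1, hj2⟩ := hj
      rw [dif_pos hj2]
      have hge : 2*m ≤ (τ ⟨j, hj2⟩).val := fhi _ (show 2*m ≤ j by omega)
      have hne1 : τ ⟨j, hj2⟩ ≠ B := by
        intro h
        rw [← f1] at h
        have h2 := τ.injective h
        have hv : j = 2*m+1 := congrArg Fin.val h2
        omega
      have hne0 : τ ⟨j, hj2⟩ ≠ A := by
        intro h
        rw [← f0] at h
        have h2 := τ.injective h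
        have hv : j = 2*m := congrArg Fin.val h2
        omega
      rw [Finset.mem_erase, Finset.mem_erase, Finset.mem_Ico]
      refine ⟨?_, ?_, hge, (τ ⟨j, hj2⟩).isLt⟩
      · intro h; apply hne1; rw [hB]; exact Fin.ext h
      · intro h; apply hne0; rw [hA]; exact Fin.ext h
    · intro l hl
      rw [Finset.mem_erase, Finset.mem_erase, Finset.mem_Ico] at hl
      obtain ⟨hlb, hla, hl2, hlN⟩ := hl
      rw [dif_pos hlN]
      have hge : 2*m ≤ (τ.symm ⟨l, hlN⟩).val := fshi _ (show 2*m ≤ l from hl2)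
      have hne0 : (τ.symm ⟨l, hlN⟩) ≠ M0 := by
        intro h
        have : (⟨l, hlN⟩ : Fin N) = A := by rw [← f0, ← h, τ.apply_symm_apply]
        apply hla
        rw [hA] at this
        exact congrArg Fin.val this
      have hne1 : (τ.symm ⟨l, hlN⟩) ≠ M1 := by
        intro h
        have : (⟨l, hlN⟩ : Fin N) = B := by rw [← f1, ← h, τ.apply_symm_apply]
        apply hlb
        rw [hB] at this
        exact congrArg Fin.val this
      rw [Finset.mem_Ico]
      have hv0 : (τ.symm ⟨l, hlN⟩).val ≠ 2*m := fun h => hne0 (Fin.ext h)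
      have hv1 : (τ.symm ⟨l, hlN⟩).val ≠ 2*m+1 := fun h => hne1 (Fin.ext h)
      exact ⟨by omega, (τ.symm ⟨l, hlN⟩).isLt⟩
    · intro j hj
      rw [Finset.mem_Ico] at hj
      rw [dif_pos hj.2, dif_pos (τ ⟨j, hj.2⟩).isLt]
      simp
    · intro l hl
      rw [Finset.mem_erase, Finset.mem_erase, Finset.mem_Ico] at hl
      rw [dif_pos hl.2.2.2, dif_pos (τ.symm ⟨l, hl.2.2.2⟩).isLt]
      simp
    · intro j hj
      rw [Finset.mem_Ico] at hj
      rw [dif_pos hj.2]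
      rw [kk_lt N k _ hj.2, kk_lt N k σ (τ ⟨j, hj.2⟩).isLt]
      rw [hmul]
  rw [heq1, heq2]
  ring

-- ============ summed combinatorics ============

lemma Bsum (N : ℕ) (k : ℕ → E4) (m : ℕ) (x : E4) :
    ∑ σ : Equiv.Perm (Fin N), ee N k σ m * Bt N k σ m x
    = (((N-2*m) * (N-2*m-1) : ℕ) : ℝ) *
        ∑ σ : Equiv.Perm (Fin N), ee N k σ (m+1) * PP N k σ (Finset.Ico (2*(m+1)) N) x := by
  set s := Finset.Ico (2*m) N with hs
  have hstep : ∀ σ : Equiv.Perm (Fin N), ee N k σ m * Bt N k σ m x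
      = ∑ a ∈ s, ∑ b ∈ s.erase a,
          ee N k σ m * (mk4 (kk N k σ a) (kk N k σ b) *
            PP N k σ ((s.erase a).erase b) x) := by
    intro σ
    unfold Bt
    rw [← hs, Finset.mul_sum]
    refine Finset.sum_congr rfl fun a _ => ?_
    rw [Finset.mul_sum]
  rw [Finset.sum_congr rfl fun σ _ => hstep σ]
  rw [Finset.sum_comm]
  have hinner : ∀ a ∈ s, ∑ b ∈ s.erase a, ∑ σ : Equiv.Perm (Fin N),
      ee N k σ m * (mk4 (kk N k σ a) (kk N k σ b) * PP N k σ ((s.erase a).erase b) x)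
      = ((s.card - 1 : ℕ) : ℝ) *
        ∑ σ : Equiv.Perm (Fin N), ee N k σ (m+1) * PP N k σ (Finset.Ico (2*(m+1)) N) x := by
    intro a ha
    have h1 : ∀ b ∈ s.erase a, ∑ σ : Equiv.Perm (Fin N),
        ee N k σ m * (mk4 (kk N k σ a) (kk N k σ b) * PP N k σ ((s.erase a).erase b) x)
        = ∑ σ : Equiv.Perm (Fin N), ee N k σ (m+1) * PP N k σ (Finset.Ico (2*(m+1)) N) x := by
      intro b hb
      exact perm_swap N k m x (hs ▸ ha) (hs ▸ hb)
    rw [Finset.sum_congr rfl h1, Finset.sum_const, Finset.card_erase_of_mem ha,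
      nsmul_eq_mul]
  have hswap : ∀ a ∈ s, ∑ σ : Equiv.Perm (Fin N), ∑ b ∈ s.erase a,
      ee N k σ m * (mk4 (kk N k σ a) (kk N k σ b) * PP N k σ ((s.erase a).erase b) x)
      = ∑ b ∈ s.erase a, ∑ σ : Equiv.Perm (Fin N),
        ee N k σ m * (mk4 (kk N k σ a) (kk N k σ b) * PP N k σ ((s.erase a).erase b) x) :=
    fun a _ => Finset.sum_comm
  rw [Finset.sum_congr rfl hswap, Finset.sum_congr rfl hinner, Finset.sum_const,
    nsmul_eq_mul]
  have hcard : s.card = N - 2*m := Nat.card_Ico _ _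
  rw [hcard, Nat.cast_mul]
  ring

-- ============ binomial identity ============

lemma nat_id (s t : ℕ) :
    Nat.choose (s+t+2) s * ((t+2)*(t+1))
      = (s+1) * ((s+t+2) * Nat.choose (s+t+1) (s+1)) := by
  have hA : Nat.choose (s+t+2) (s+1) * (s+1) = Nat.choose (s+t+2) s * (t+2) := by
    have := Nat.choose_succ_right_eq (s+t+2) s
    rwa [show s+t+2-s = t+2 by omega] at this
  have hB : Nat.choose (s+t+1) (s+1) * (s+1) = Nat.choose (s+t+1) s * (t+1) := by
    have := Nat.choose_succ_right_eq (s+t+1) s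
    rwa [show s+t+1-s = t+1 by omega] at this
  have hC : (s+t+2) * Nat.choose (s+t+1) s = Nat.choose (s+t+2) (s+1) * (s+1) := by
    have := Nat.add_one_mul_choose_eq (s+t+1) s
    simpa [Nat.succ_eq_add_one] using this
  calc Nat.choose (s+t+2) s * ((t+2)*(t+1))
      = (Nat.choose (s+t+2) s * (t+2)) * (t+1) := by ring
    _ = (Nat.choose (s+t+2) (s+1) * (s+1)) * (t+1) := by rw [hA]
    _ = ((s+t+2) * Nat.choose (s+t+1) s) * (t+1) := by rw [hC]
    _ = (s+t+2) * (Nat.choose (s+t+1) s * (t+1)) := by ring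
    _ = (s+t+2) * (Nat.choose (s+t+1) (s+1) * (s+1)) := by rw [hB]
    _ = (s+1) * ((s+t+2) * Nat.choose (s+t+1) (s+1)) := by ring

lemma cc_id (N m : ℕ) (h : 2*(m+1) ≤ N) :
    cc N m * (((N-2*m) * (N-2*m-1) : ℕ) : ℝ)
      = cc N (m+1) * (-4*((m:ℝ)+1)*((N:ℝ)-(m:ℝ))) := by
  obtain ⟨t, ht⟩ : ∃ t, N = 2*m+t+2 := ⟨N-2*m-2, by omega⟩
  subst ht
  have e1 : 2*m+t+2-2*m = t+2 := by omega
  have e2 : (t+2)*(t+2-1) = (t+2)*(t+1) := rfl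
  have e3 : 2*m+t+2-m = m+t+2 := by omega
  have e4 : 2*m+t+2-(m+1) = m+t+1 := by omega
  unfold cc
  rw [e1, e2, e3, e4]
  have hid := nat_id m t
  have hcast : ((Nat.choose (m+t+2) m : ℕ) : ℝ) * (((t:ℝ)+2)*((t:ℝ)+1))
      = ((m:ℝ)+1) * (((m:ℝ)+(t:ℝ)+2) * ((Nat.choose (m+t+1) (m+1) : ℕ) : ℝ)) := by
    exact_mod_cast congrArg (Nat.cast (R := ℝ)) hid
  push_cast
  linear_combination ((-1:ℝ)/4)^m * hcast

-- ============ the m-shift ============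

lemma main_sum (N : ℕ) (k : ℕ → E4) (x : E4) :
    ∑ m ∈ Finset.range (N/2+1), cc N m * ((((N-2*m) * (N-2*m-1) : ℕ)) : ℝ) *
        (∑ σ : Equiv.Perm (Fin N), ee N k σ (m+1) * PP N k σ (Finset.Ico (2*(m+1)) N) x)
    = ∑ m ∈ Finset.range (N/2+1), cc N m * (-4*(m:ℝ)*((N:ℝ)-(m:ℝ)+1)) *
        (∑ σ : Equiv.Perm (Fin N), ee N k σ m * PP N k σ (Finset.Ico (2*m) N) x) := by
  rw [Finset.sum_range_succ, Finset.sum_range_succ']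
  have hz1 : (((N-2*(N/2)) * (N-2*(N/2)-1) : ℕ) : ℝ) = 0 := by
    have h0 : N-2*(N/2) = 0 ∨ N-2*(N/2)-1 = 0 := by omega
    rcases h0 with h0 | h0 <;> rw [h0] <;> simp
  have hz2 : cc N 0 * (-4*((0:ℕ):ℝ)*((N:ℝ)-((0:ℕ):ℝ)+1)) *
      (∑ σ : Equiv.Perm (Fin N), ee N k σ 0 * PP N k σ (Finset.Ico (2*0) N) x) = 0 := by
    push_cast; ring
  rw [hz1, hz2]
  rw [mul_zero, zero_mul, add_zero, add_zero]
  refine Finset.sum_congr rfl fun m hm => ?_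
  rw [Finset.mem_range] at hm
  have h2 : 2*(m+1) ≤ N := by omega
  rw [cc_id N m h2]
  have : (-4*((m:ℝ)+1)*((N:ℝ)-(m:ℝ))) = (-4*(((m+1:ℕ)):ℝ)*((N:ℝ)-(((m+1:ℕ)):ℝ)+1)) := by
    push_cast; ring
  rw [this]

-- ============ final assembly ============

lemma grand (N : ℕ) (k : ℕ → E4) {x : E4} (hx : x ∈ Hb) :
    D2H (Cfun N k) x = (1 - ((N:ℝ)+1)^2) * Cfun N k x := by
  rw [box_formula N k hx, Cfun_eq N k x]
  have hT1 : ∑ σ : Equiv.Perm (Fin N), ∑ m ∈ Finset.range (N/2+1),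
      (cc N m * ee N k σ m) * Bt N k σ m x
      = ∑ m ∈ Finset.range (N/2+1), cc N m * ((((N-2*m) * (N-2*m-1) : ℕ)) : ℝ) *
          (∑ σ : Equiv.Perm (Fin N), ee N k σ (m+1) * PP N k σ (Finset.Ico (2*(m+1)) N) x) := by
    rw [Finset.sum_comm]
    refine Finset.sum_congr rfl fun m _ => ?_
    have hpull : ∑ σ : Equiv.Perm (Fin N), (cc N m * ee N k σ m) * Bt N k σ m x
        = cc N m * ∑ σ : Equiv.Perm (Fin N), ee N k σ m * Bt N k σ m x := by
      rw [Finset.mul_sum]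
      exact Finset.sum_congr rfl fun σ _ => by ring
    rw [hpull, Bsum]
    ring
  have hT2 : ∑ σ : Equiv.Perm (Fin N), ∑ m ∈ Finset.range (N/2+1),
      (cc N m * ee N k σ m) * (ββ N m * PP N k σ (Finset.Ico (2*m) N) x)
      = ∑ m ∈ Finset.range (N/2+1), (cc N m * ββ N m) *
          (∑ σ : Equiv.Perm (Fin N), ee N k σ m * PP N k σ (Finset.Ico (2*m) N) x) := by
    rw [Finset.sum_comm]
    refine Finset.sum_congr rfl fun m _ => ?_
    rw [Finset.mul_sum]
    exact Finset.sum_congr rfl fun σ _ => by ring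
  have hR : ∑ σ : Equiv.Perm (Fin N), ∑ m ∈ Finset.range (N/2+1),
      (cc N m * ee N k σ m) * PP N k σ (Finset.Ico (2*m) N) x
      = ∑ m ∈ Finset.range (N/2+1), cc N m *
          (∑ σ : Equiv.Perm (Fin N), ee N k σ m * PP N k σ (Finset.Ico (2*m) N) x) := by
    rw [Finset.sum_comm]
    refine Finset.sum_congr rfl fun m _ => ?_
    rw [Finset.mul_sum]
    exact Finset.sum_congr rfl fun σ _ => by ring
  have hsplit : ∑ σ : Equiv.Perm (Fin N), ∑ m ∈ Finset.range (N/2+1),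
      (cc N m * ee N k σ m) * (Bt N k σ m x + ββ N m * PP N k σ (Finset.Ico (2*m) N) x)
      = (∑ σ : Equiv.Perm (Fin N), ∑ m ∈ Finset.range (N/2+1),
          (cc N m * ee N k σ m) * Bt N k σ m x)
        + ∑ σ : Equiv.Perm (Fin N), ∑ m ∈ Finset.range (N/2+1),
            (cc N m * ee N k σ m) * (ββ N m * PP N k σ (Finset.Ico (2*m) N) x) := by
    rw [← Finset.sum_add_distrib]
    refine Finset.sum_congr rfl fun σ _ => ?_
    rw [← Finset.sum_add_distrib]
    exact Finset.sum_congr rfl fun m _ => by ring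
  rw [hsplit, hT1, main_sum, hT2, hR]
  have hfin : (∑ m ∈ Finset.range (N/2+1), cc N m * (-4*(m:ℝ)*((N:ℝ)-(m:ℝ)+1)) *
        (∑ σ : Equiv.Perm (Fin N), ee N k σ m * PP N k σ (Finset.Ico (2*m) N) x))
      + ∑ m ∈ Finset.range (N/2+1), (cc N m * ββ N m) *
          (∑ σ : Equiv.Perm (Fin N), ee N k σ m * PP N k σ (Finset.Ico (2*m) N) x)
      = (1 - ((N:ℝ)+1)^2) * ∑ m ∈ Finset.range (N/2+1), cc N m *
          (∑ σ : Equiv.Perm (Fin N), ee N k σ m * PP N k σ (Finset.Ico (2*m) N) x) := by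
    rw [← Finset.sum_add_distrib, Finset.mul_sum]
    refine Finset.sum_congr rfl fun m hm => ?_
    rw [Finset.mem_range] at hm
    have h2m : 2*m ≤ N := by omega
    have hcard : (((Finset.Ico (2*m) N).card : ℕ) : ℝ) = (N:ℝ) - 2*(m:ℝ) := by
      rw [Nat.card_Ico, Nat.cast_sub h2m]
      push_cast; ring
    unfold ββ pE
    rw [hcard]
    ring
  rw [hfin]
  ring


/-
STATEMENT 8: C(α_{μ₁}⋯α_{μ_{n-1}}) satisfies D²C = (1−n²)C on H, for any asymptotic
translations α_{μ_i} (i.e. any index vectors k j ∈ ℝ⁴ ≅ T).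
-/
theorem stmt8 (n : ℕ) (hn : 1 ≤ n) (k : ℕ → E4) :
    ∀ x ∈ Hb, D2H (Cfun (n - 1) k) x = (1 - (n : ℝ)^2) * Cfun (n - 1) k x := by
  intro x hx
  have h := grand (n-1) k hx
  have hc : ((n-1 : ℕ) : ℝ) + 1 = (n : ℝ) := by
    rw [Nat.cast_sub hn]; push_cast; ring
  rw [h, hc]
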